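/- arXiv:1911.13200 — 3 statements merged into one kernel-verified Lean document; each statement's English description precedes it below -/
import Mathlib

section
/- The group SU(2) admits no left-invariant Levi-flat CR structure: there is no one-dimensional complex Lie subalgebra h of su(2) ⊗ C with h ∩ h̄ = 0 such that h + h̄ is a Lie subalgebra. -/
/-!
Write `h = ℂ Z`. Levi-flatness puts `⁅Z, Zᴴ⁆` in the span of `Z` and `Zᴴ`. Since `⁅Z, Zᴴ⁆` is
Hermitian and trace-orthogonal to both `Z` and `Zᴴ`, its Frobenius norm vanishes, so `Z` is normal.
But commuting traceless `2 × 2` matrices are proportional (the rank of `sl₂` is one), so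
`Zᴴ ∈ ℂ Z`, i.e. `h ∩ h̄ ≠ 0`.
-/

open Matrix
open scoped ComplexOrder

namespace Matrix

section Trace

variable {n R : Type*} [Fintype n] [CommRing R]

theorem trace_lie_mul_left (A B : Matrix n n R) : trace (⁅A, B⁆ * A) = 0 := by
  rw [Ring.lie_def, sub_mul, trace_sub, mul_assoc, trace_mul_comm, mul_assoc, sub_self]

theorem trace_lie_mul_right (A B : Matrix n n R) : trace (⁅A, B⁆ * B) = 0 := by
  rw [Ring.lie_def, sub_mul, trace_sub, mul_assoc B, trace_mul_comm B, sub_self]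

theorem commute_conjTranspose_of_lie_eq_smul_add_smul [StarRing R] [PartialOrder R]
    [StarOrderedRing R] [NoZeroDivisors R] {A : Matrix n n R} {α β : R}
    (h : ⁅A, Aᴴ⁆ = α • A + β • Aᴴ) : Commute A Aᴴ := by
  set C := ⁅A, Aᴴ⁆
  have hC : Cᴴ = C := by
    simp only [C, Ring.lie_def, conjTranspose_sub, conjTranspose_mul, conjTranspose_conjTranspose]
  have hnorm : trace (C * Cᴴ) = 0 := by
    rw [hC]
    nth_rewrite 2 [h]
    rw [mul_add, trace_add, mul_smul_comm, mul_smul_comm, trace_smul, trace_smul,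
      trace_lie_mul_left, trace_lie_mul_right, smul_zero, smul_zero, add_zero]
  exact sub_eq_zero.mp (trace_mul_conjTranspose_self_eq_zero_iff.mp hnorm)

end Trace

theorem eta_fin_two_of_trace_eq_zero {R : Type*} [Ring R] {M : Matrix (Fin 2) (Fin 2) R}
    (h : trace M = 0) : M = !![M 0 0, M 0 1; M 1 0, -M 0 0] := by
  rw [trace_fin_two, add_eq_zero_iff_eq_neg'] at h
  rw [← h]
  exact eta_fin_two M

/-- The commutator of `!![a, b; c, -a]` and `!![p, q; r, -p]` has entries the cross product of
`(a, b, c)` and `(p, q, r)` (up to factors of `2`). -/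
theorem exists_eq_smul_of_commute_of_trace_eq_zero {K : Type*} [Field K] [NeZero (2 : K)]
    {Z W : Matrix (Fin 2) (Fin 2) K} (hZ : trace Z = 0) (hW : trace W = 0) (hZ0 : Z ≠ 0)
    (hZW : Commute Z W) : ∃ μ : K, W = μ • Z := by
  obtain ⟨a, b, c, rfl⟩ : ∃ a b c : K, Z = !![a, b; c, -a] :=
    ⟨_, _, _, eta_fin_two_of_trace_eq_zero hZ⟩
  obtain ⟨p, q, r, rfl⟩ : ∃ p q r : K, W = !![p, q; r, -p] :=
    ⟨_, _, _, eta_fin_two_of_trace_eq_zero hW⟩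
  simp only [Commute, SemiconjBy, mul_fin_two, ← Matrix.ext_iff, Fin.forall_fin_two, of_apply,
    cons_val', cons_val_zero, cons_val_one, empty_val', cons_val_fin_one] at hZW
  obtain ⟨⟨h00, h01⟩, h10, -⟩ := hZW
  have hcross : ![a, b, c] ⨯₃ ![p, q, r] = 0 := by
    simp only [cross_apply, cons_val_zero, cons_val_one, cons_val_two, tail_cons, head_cons,
      cons_eq_zero_iff, zero_empty, and_true]
    refine ⟨?_, ?_, ?_⟩
    · linear_combination h00
    · exact mul_left_cancel₀ two_ne_zero (by linear_combination h10)
    · exact mul_left_cancel₀ two_ne_zero (by linear_combination h01)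
  have hv : ![a, b, c] ≠ 0 := by
    contrapose! hZ0
    obtain ⟨rfl, rfl, rfl⟩ : a = 0 ∧ b = 0 ∧ c = 0 := by simpa using hZ0
    rw [neg_zero]
    exact etaExpand_eq 0
  obtain ⟨μ, hμ⟩ : ∃ μ : K, μ • ![a, b, c] = ![p, q, r] := by
    simpa [LinearIndependent.pair_iff' hv] using
      mt crossProduct_ne_zero_iff_linearIndependent.mpr (not_not.mpr hcross)
  refine ⟨μ, ?_⟩
  simp only [smul_cons, smul_eq_mul, smul_empty, vecCons_inj, and_true] at hμ
  simp only [← hμ, smul_of, smul_cons, smul_eq_mul, smul_empty, mul_neg]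

end Matrix

/-- `SU(2)` admits no left-invariant Levi-flat CR structure: there is no one-dimensional
complex Lie subalgebra `h` of `su(2) ⊗ ℂ` (the traceless `2×2` complex matrices, with
conjugation `M ↦ −Mᴴ` relative to the real form `su(2)`) such that `h ∩ h̄ = 0` and
`h + h̄` is closed under the bracket. -/
theorem stmt8 :
    ¬ ∃ h : Submodule ℂ (Matrix (Fin 2) (Fin 2) ℂ),
      (∀ M ∈ h, Matrix.trace M = 0) ∧
      Module.finrank ℂ h = 1 ∧
      (∀ A ∈ h, ∀ B ∈ h, ⁅A, B⁆ ∈ h) ∧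
      (∀ M, M ∈ h → -Mᴴ ∈ h → M = 0) ∧
      (∀ A B C D : Matrix (Fin 2) (Fin 2) ℂ, A ∈ h → B ∈ h → C ∈ h → D ∈ h →
        ∃ E ∈ h, ∃ F ∈ h, ⁅A + -Bᴴ, C + -Dᴴ⁆ = E + -Fᴴ) := by
  rintro ⟨h, htr, hrk, -, hreal, hflat⟩
  obtain ⟨⟨Z, hZ⟩, hZ0, hspan⟩ := finrank_eq_one_iff'.mp hrk
  replace hZ0 : Z ≠ 0 := by simpa using hZ0
  have hmul : ∀ M ∈ h, ∃ c : ℂ, c • Z = M := fun M hM ↦ by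
    simpa [Subtype.ext_iff] using hspan ⟨M, hM⟩
  obtain ⟨E, hE, F, hF, hEF⟩ := hflat Z 0 0 Z hZ h.zero_mem h.zero_mem hZ
  obtain ⟨e, rfl⟩ := hmul E hE
  obtain ⟨f, rfl⟩ := hmul F hF
  have hlie : ⁅Z, Zᴴ⁆ = (-e) • Z + starRingEnd ℂ f • Zᴴ := by
    simp only [conjTranspose_zero, neg_zero, add_zero, zero_add, conjTranspose_smul,
      RCLike.star_def, Ring.lie_def, mul_neg, neg_mul, sub_neg_eq_add, neg_add_eq_sub] at hEF
    rw [Ring.lie_def, ← neg_sub, hEF, neg_add, neg_neg, neg_smul]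
  obtain ⟨μ, hμ⟩ := exists_eq_smul_of_commute_of_trace_eq_zero (htr Z hZ)
    (by rw [trace_conjTranspose, htr Z hZ, star_zero]) hZ0
    (commute_conjTranspose_of_lie_eq_smul_add_smul hlie)
  refine hZ0 (hreal Z hZ ?_)
  rw [hμ, ← neg_smul]
  exact h.smul_mem _ hZ
end

section
/- In su(3) ⊗ C with L₁ = X₁ − iY₁, L₂ = X₂ − iY₂, L₃ = X₃ − iY₃, one has [L₁,L₂] = 0, [L₁,L₃] = 2iL₂, [L₂,L₃] = 0; hence h = span_C{L₁, L₂, L₃} is a Lie subalgebra of su(3) ⊗ C with h ∩ h̄ = 0. -/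
/-! Each `Lⱼ = Xⱼ - i Yⱼ` is `2i` times a matrix unit `E₀₁, E₀₂, E₁₂`, so the bracket relations
follow from `E_ab E_cd = δ_bc E_ad`, and they show that the span `𝔥` is closed under the bracket.
Moreover `𝔥` consists of strictly upper triangular matrices while `-Mᴴ` is strictly lower
triangular for such `M`, so only `M = 0` lies in both. -/

open Matrix

noncomputable section

def T1 : Matrix (Fin 3) (Fin 3) ℂ := !![Complex.I, 0, 0; 0, -Complex.I, 0; 0, 0, 0]
def T2 : Matrix (Fin 3) (Fin 3) ℂ := !![Complex.I, 0, 0; 0, Complex.I, 0; 0, 0, -2*Complex.I]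
def X1 : Matrix (Fin 3) (Fin 3) ℂ := !![0, Complex.I, 0; Complex.I, 0, 0; 0, 0, 0]
def Y1 : Matrix (Fin 3) (Fin 3) ℂ := !![0, -1, 0; 1, 0, 0; 0, 0, 0]
def X2 : Matrix (Fin 3) (Fin 3) ℂ := !![0, 0, Complex.I; 0, 0, 0; Complex.I, 0, 0]
def Y2 : Matrix (Fin 3) (Fin 3) ℂ := !![0, 0, -1; 0, 0, 0; 1, 0, 0]
def X3 : Matrix (Fin 3) (Fin 3) ℂ := !![0, 0, 0; 0, 0, Complex.I; 0, Complex.I, 0]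
def Y3 : Matrix (Fin 3) (Fin 3) ℂ := !![0, 0, 0; 0, 0, -1; 0, 1, 0]

def L1 : Matrix (Fin 3) (Fin 3) ℂ := X1 - Complex.I • Y1
def L2 : Matrix (Fin 3) (Fin 3) ℂ := X2 - Complex.I • Y2
def L3 : Matrix (Fin 3) (Fin 3) ℂ := X3 - Complex.I • Y3

section LieSpan

variable {R L : Type*} [CommRing R] [LieRing L] [LieAlgebra R L]

open Submodule in
theorem lie_mem_span_of_forall_lie_mem_span {s : Set L}
    (hs : ∀ x ∈ s, ∀ y ∈ s, ⁅x, y⁆ ∈ span R s) {x y : L} (hx : x ∈ span R s)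
    (hy : y ∈ span R s) : ⁅x, y⁆ ∈ span R s := by
  induction hx, hy using span_induction₂ with
  | mem_mem x y hx hy => exact hs x hx y hy
  | zero_left y _ => simp
  | zero_right x _ => simp
  | add_left x y z _ _ _ hx hy => simpa only [add_lie] using add_mem hx hy
  | add_right x y z _ _ _ hx hy => simpa only [lie_add] using add_mem hx hy
  | smul_left r x y _ _ h => simpa only [smul_lie] using smul_mem _ r h
  | smul_right r x y _ _ h => simpa only [lie_smul] using smul_mem _ r h

end LieSpan

namespace Matrix

section Single

variable {n R : Type*} [Fintype n] [DecidableEq n] [Ring R]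

theorem lie_single_single_of_ne {i j l : n} (hli : l ≠ i) (a b : R) :
    ⁅single i j a, single j l b⁆ = single i l (a * b) := by
  simp [Ring.lie_def, hli]

theorem lie_single_single_eq_zero {i j k l : n} (hjk : j ≠ k) (hli : l ≠ i) (a b : R) :
    ⁅single i j a, single k l b⁆ = 0 := by
  simp [Ring.lie_def, hjk, hli]

end Single

def strictUpperTriangular (R n : Type*) [Semiring R] [Preorder n] :
    Submodule R (Matrix n n R) where
  carrier := {M | ∀ i j, j ≤ i → M i j = 0}
  add_mem' hM hN i j hji := by rw [add_apply, hM i j hji, hN i j hji, add_zero]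
  zero_mem' _ _ _ := rfl
  smul_mem' c M hM i j hji := by rw [smul_apply, hM i j hji, smul_zero]

section StrictUpperTriangular

variable {R n : Type*} [Semiring R]

theorem single_mem_strictUpperTriangular [Preorder n] [DecidableEq n] {i j : n} (hij : i < j)
    (a : R) : single i j a ∈ strictUpperTriangular R n := fun _ _ hji =>
  single_apply_of_ne _ _ _ _ _ (by rintro ⟨rfl, rfl⟩; exact hji.not_gt hij)

theorem eq_zero_of_mem_strictUpperTriangular_of_conjTranspose_mem [LinearOrder n] [StarRing R]
    {M : Matrix n n R} (hM : M ∈ strictUpperTriangular R n)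
    (hMH : Mᴴ ∈ strictUpperTriangular R n) : M = 0 := by
  ext i j
  rcases le_total j i with hji | hij
  · exact hM i j hji
  · simpa using hMH j i hij

end StrictUpperTriangular

end Matrix

open Complex

theorem L1_eq_single : L1 = single 0 1 (2 * I) := by
  ext i j; fin_cases i <;> fin_cases j <;> simp [L1, X1, Y1, single]; ring

theorem L2_eq_single : L2 = single 0 2 (2 * I) := by
  ext i j; fin_cases i <;> fin_cases j <;> simp [L2, X2, Y2, single]; ring

theorem L3_eq_single : L3 = single 1 2 (2 * I) := by
  ext i j; fin_cases i <;> fin_cases j <;> simp [L3, X3, Y3, single]; ring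

theorem lie_L1_L2 : ⁅L1, L2⁆ = 0 := by
  rw [L1_eq_single, L2_eq_single]
  exact lie_single_single_eq_zero (by decide) (by decide) _ _

theorem lie_L1_L3 : ⁅L1, L3⁆ = (2 * I) • L2 := by
  rw [L1_eq_single, L2_eq_single, L3_eq_single, lie_single_single_of_ne (by decide), smul_single,
    smul_eq_mul]

theorem lie_L2_L3 : ⁅L2, L3⁆ = 0 := by
  rw [L2_eq_single, L3_eq_single]
  exact lie_single_single_eq_zero (by decide) (by decide) _ _

abbrev 𝔥 : Submodule ℂ (Matrix (Fin 3) (Fin 3) ℂ) := Submodule.span ℂ {L1, L2, L3}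

theorem 𝔥_le_strictUpperTriangular : 𝔥 ≤ strictUpperTriangular ℂ (Fin 3) := by
  rw [Submodule.span_le]
  rintro _ (rfl | rfl | rfl)
  · rw [L1_eq_single]; exact single_mem_strictUpperTriangular (by decide) _
  · rw [L2_eq_single]; exact single_mem_strictUpperTriangular (by decide) _
  · rw [L3_eq_single]; exact single_mem_strictUpperTriangular (by decide) _

section

-- Mathlib provides the commutator Lie ring structure on an associative ring only as a local instance.
attribute [local instance] LieRing.ofAssociativeRing LieAlgebra.ofAssociativeAlgebra

theorem lie_mem_𝔥 {A B : Matrix (Fin 3) (Fin 3) ℂ} (hA : A ∈ 𝔥) (hB : B ∈ 𝔥) :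
    ⁅A, B⁆ ∈ 𝔥 := by
  refine lie_mem_span_of_forall_lie_mem_span ?_ hA hB
  have hL2 : (2 * I) • L2 ∈ 𝔥 := Submodule.smul_mem _ _ (Submodule.subset_span (by simp))
  rintro x (rfl | rfl | rfl) y (rfl | rfl | rfl) <;>
    simp only [lie_self, ← lie_skew L2 L1, ← lie_skew L3 L1, ← lie_skew L3 L2, lie_L1_L2,
      lie_L1_L3, lie_L2_L3, neg_zero, neg_mem_iff, hL2, zero_mem]

end

-- `h̄` is the image of `h` under the conjugation `M ↦ -Mᴴ` fixing the real form `su(3)`.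
/-- In `su(3) ⊗ ℂ` with `Lⱼ = Xⱼ − iYⱼ`, one has `[L₁,L₂] = 0`, `[L₁,L₃] = 2iL₂`,
`[L₂,L₃] = 0`; hence `h = span_ℂ{L₁, L₂, L₃}` is a Lie subalgebra with `h ∩ h̄ = 0`
(conjugation relative to the real form `su(3)` being `M ↦ −Mᴴ`). -/
theorem stmt9 :
    ⁅L1, L2⁆ = 0 ∧ ⁅L1, L3⁆ = (2 * Complex.I) • L2 ∧ ⁅L2, L3⁆ = 0 ∧
    (∀ A ∈ Submodule.span ℂ ({L1, L2, L3} : Set (Matrix (Fin 3) (Fin 3) ℂ)),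
      ∀ B ∈ Submodule.span ℂ ({L1, L2, L3} : Set (Matrix (Fin 3) (Fin 3) ℂ)),
        ⁅A, B⁆ ∈ Submodule.span ℂ ({L1, L2, L3} : Set (Matrix (Fin 3) (Fin 3) ℂ))) ∧
    (∀ M ∈ Submodule.span ℂ ({L1, L2, L3} : Set (Matrix (Fin 3) (Fin 3) ℂ)),
      -Mᴴ ∈ Submodule.span ℂ ({L1, L2, L3} : Set (Matrix (Fin 3) (Fin 3) ℂ)) → M = 0) := by
  refine ⟨lie_L1_L2, lie_L1_L3, lie_L2_L3, fun A hA B hB => lie_mem_𝔥 hA hB,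
    fun M hM hMH => ?_⟩
  refine eq_zero_of_mem_strictUpperTriangular_of_conjTranspose_mem
    (𝔥_le_strictUpperTriangular hM) ?_
  simpa using neg_mem (𝔥_le_strictUpperTriangular hMH)
end
end

section
/- Let T be a torus (compact connected abelian Lie group) with complexified Lie algebra t, and h ⊂ t a subalgebra with h + h̄ = t. If u is a smooth (p,q)-form on T (with respect to the splitting induced by h) such that the Lie derivative L'_Z u = 0 for every Z ∈ h, then all coefficient functions of u in a left-invariant coframe are constant; i.e., u is left-invariant. -/
open Real

private lemma aux_fderiv_sum {d : ℕ} (f : (Fin d → ℝ) → ℂ) (x : Fin d → ℝ) (w : Fin d → ℝ) :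
    fderiv ℝ f x w = ∑ j, (w j : ℂ) * fderiv ℝ f x (Pi.single j 1) := by
  have hw : w = ∑ j, w j • (Pi.single j 1 : Fin d → ℝ) := by
    ext k
    simp [Pi.single_apply, Finset.sum_ite_eq']
  conv_lhs => rw [hw]
  rw [map_sum]
  refine Finset.sum_congr rfl fun j _ => ?_
  rw [(fderiv ℝ f x).map_smul]
  exact Complex.real_smul

private lemma aux_dir {d : ℕ} (f : (Fin d → ℝ) → ℂ) (hf : ContDiff ℝ (⊤ : ℕ∞) f)
    (hbdd : Bornology.IsBounded (Set.range f)) (α β : Fin d → ℝ)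
    (heq : ∀ p, fderiv ℝ f p α + Complex.I * fderiv ℝ f p β = 0) :
    ∀ x, fderiv ℝ f x α = 0 ∧ fderiv ℝ f x β = 0 := by
  have hdiff : Differentiable ℝ f := hf.differentiable (by simp)
  -- translation invariance along α and β, via Liouville's theorem
  have key : ∀ x : Fin d → ℝ, ∀ z : ℂ, f (x + (z.re • α + z.im • β)) = f x := by
    intro x z
    set φ : ℂ → (Fin d → ℝ) := fun w => x + (w.re • α + w.im • β) with hφdef
    set M : ℂ →L[ℝ] (Fin d → ℝ) :=
      Complex.reCLM.smulRight α + Complex.imCLM.smulRight β with hMdef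
    have hFd : ∀ w : ℂ, HasDerivAt (f ∘ φ) (fderiv ℝ f (φ w) α) w := by
      intro w
      have hφ : HasFDerivAt φ M w := (M.hasFDerivAt).const_add x
      have hcomp : HasFDerivAt (f ∘ φ) ((fderiv ℝ f (φ w)).comp M) w :=
        (hdiff (φ w)).hasFDerivAt.comp w hφ
      rw [hasDerivAt_iff_hasFDerivAt]
      refine hasFDerivAt_of_restrictScalars ℝ hcomp ?_
      have hβ : fderiv ℝ f (φ w) β = Complex.I * fderiv ℝ f (φ w) α := by
        have h0 := heq (φ w)
        linear_combination (-Complex.I) * h0 + (fderiv ℝ f (φ w) β) * Complex.I_mul_I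
      apply ContinuousLinearMap.ext
      intro v
      have hL : (ContinuousLinearMap.restrictScalars ℝ
          (ContinuousLinearMap.toSpanSingleton ℂ (fderiv ℝ f (φ w) α))) v
          = v * fderiv ℝ f (φ w) α := by
        simp [smul_eq_mul]
      have hR : ((fderiv ℝ f (φ w)).comp M) v
          = (v.re : ℂ) * fderiv ℝ f (φ w) α + (v.im : ℂ) * fderiv ℝ f (φ w) β := by
        simp [hMdef, Complex.real_smul]
      rw [hL, hR, hβ]
      linear_combination (-(fderiv ℝ f (φ w) α)) * (Complex.re_add_im v)
    have hFdiff : Differentiable ℂ (f ∘ φ) := fun w => (hFd w).differentiableAt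
    have hb : Bornology.IsBounded (Set.range (f ∘ φ)) :=
      hbdd.subset (Set.range_comp_subset_range φ f)
    have hz := hFdiff.apply_eq_apply_of_bounded hb z 0
    simp only [Function.comp_apply, hφdef] at hz
    simpa using hz
  intro x
  constructor
  · -- derivative along α vanishes
    have h1 : ∀ s : ℝ, f (x + s • α) = f x := by
      intro s
      have := key x (s : ℂ)
      simpa using this
    have hψ : HasDerivAt (fun s : ℝ => x + s • α) α 0 := by
      simpa using ((hasDerivAt_id (0 : ℝ)).smul_const α).const_add x
    have hline : HasDerivAt (fun s : ℝ => f (x + s • α)) (fderiv ℝ f x α) 0 :=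
      HasFDerivAt.comp_hasDerivAt_of_eq 0 (hdiff x).hasFDerivAt hψ (by simp)
    have hc : HasDerivAt (fun s : ℝ => f (x + s • α)) 0 0 := by
      have hgg : (fun s : ℝ => f (x + s • α)) = fun _ => f x := funext h1
      rw [hgg]; exact hasDerivAt_const _ _
    exact hline.unique hc
  · -- derivative along β vanishes
    have h1 : ∀ t : ℝ, f (x + t • β) = f x := by
      intro t
      have := key x ((t : ℂ) * Complex.I)
      simpa [Complex.mul_re, Complex.mul_im] using this
    have hψ : HasDerivAt (fun t : ℝ => x + t • β) β 0 := by
      simpa using ((hasDerivAt_id (0 : ℝ)).smul_const β).const_add x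
    have hline : HasDerivAt (fun t : ℝ => f (x + t • β)) (fderiv ℝ f x β) 0 :=
      HasFDerivAt.comp_hasDerivAt_of_eq 0 (hdiff x).hasFDerivAt hψ (by simp)
    have hc : HasDerivAt (fun t : ℝ => f (x + t • β)) 0 0 := by
      have hgg : (fun t : ℝ => f (x + t • β)) = fun _ => f x := funext h1
      rw [hgg]; exact hasDerivAt_const _ _
    exact hline.unique hc

/-- Let `𝕋 = ℝ^d/(2πℤ)^d` be a torus with complexified Lie algebra `t = ℂ^d`, and let
`h ⊆ ℂ^d` be an elliptic subalgebra (`h + h̄ = ℂ^d`).  If `u` is a smooth `(p,q)`-form on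
`𝕋`, given by its coefficient functions `u i` (indexed by `i : ι`) in a left-invariant
coframe, and the Lie derivative `L'_Z u = 0` for every `Z ∈ h` — i.e. every coefficient is
annihilated by every constant vector field `Z ∈ h` — then all coefficient functions are
constant, i.e. `u` is left-invariant. -/
theorem stmt19 (d : ℕ) (h : Submodule ℂ (Fin d → ℂ))
    (hell : ∀ v : Fin d → ℂ, ∃ a ∈ h, ∃ b ∈ h, v = a + star b)
    (ι : Type*) (u : ι → (Fin d → ℝ) → ℂ)
    (hsmooth : ∀ i, ContDiff ℝ (⊤ : ℕ∞) (u i))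
    (hper : ∀ (i : ι) (x : Fin d → ℝ) (k : Fin d → ℤ),
      u i (x + fun j => 2 * π * (k j : ℝ)) = u i x)
    (hann : ∀ Z ∈ h, ∀ (i : ι) (x : Fin d → ℝ),
      (∑ j, Z j * fderiv ℝ (u i) x (Pi.single j 1)) = 0) :
    ∀ i : ι, ∃ c : ℂ, ∀ x, u i x = c := by
  intro i
  set f : (Fin d → ℝ) → ℂ := u i with hfdef
  have hdiff : Differentiable ℝ f := (hsmooth i).differentiable (by simp)
  have hπ : (0 : ℝ) < 2 * π := by positivity
  -- boundedness of the range, by periodicity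
  have hbdd : Bornology.IsBounded (Set.range f) := by
    have hsub : Set.range f ⊆ f '' Set.Icc (0 : Fin d → ℝ) (fun _ => 2 * π) := by
      rintro _ ⟨x, rfl⟩
      refine ⟨x + fun j => 2 * π * ((-⌊x j / (2 * π)⌋ : ℤ) : ℝ), ?_,
        hper i x fun j => -⌊x j / (2 * π)⌋⟩
      rw [Set.mem_Icc]
      constructor <;> intro j <;>
      · have h1 : ((⌊x j / (2 * π)⌋ : ℝ)) * (2 * π) ≤ x j :=
          (le_div_iff₀ hπ).mp (Int.floor_le _)
        have h2 : x j < ((⌊x j / (2 * π)⌋ : ℝ) + 1) * (2 * π) :=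
          (div_lt_iff₀ hπ).mp (Int.lt_floor_add_one _)
        simp only [Pi.add_apply, Pi.zero_apply, Int.cast_neg]
        linarith
    exact (((isCompact_Icc).image (hsmooth i).continuous).isBounded).subset hsub
  -- the Cauchy-Riemann type equation for every Z ∈ h
  have heq : ∀ Z ∈ h, ∀ p, fderiv ℝ f p (fun j => (Z j).re)
      + Complex.I * fderiv ℝ f p (fun j => (Z j).im) = 0 := by
    intro Z hZ p
    have h0 := hann Z hZ i p
    rw [aux_fderiv_sum f p, aux_fderiv_sum f p, Finset.mul_sum, ← Finset.sum_add_distrib, ← h0]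
    refine Finset.sum_congr rfl fun j _ => ?_
    linear_combination (fderiv ℝ f p (Pi.single j 1)) * (Complex.re_add_im (Z j))
  have hdir : ∀ Z ∈ h, ∀ x, fderiv ℝ f x (fun j => (Z j).re) = 0
      ∧ fderiv ℝ f x (fun j => (Z j).im) = 0 :=
    fun Z hZ => aux_dir f (hsmooth i) hbdd _ _ (heq Z hZ)
  -- all partial derivatives vanish
  have hzero : ∀ x, fderiv ℝ f x = 0 := by
    intro x
    have hsing : ∀ j, fderiv ℝ f x (Pi.single j 1) = 0 := by
      intro j
      obtain ⟨a, ha, b, hb, hab⟩ := hell (Pi.single j 1)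
      have hA := hann a ha i x
      have hBre : (∑ k, (((b k).re : ℝ) : ℂ) * fderiv ℝ f x (Pi.single k 1)) = 0 := by
        rw [← aux_fderiv_sum]; exact (hdir b hb x).1
      have hBim : (∑ k, (((b k).im : ℝ) : ℂ) * fderiv ℝ f x (Pi.single k 1)) = 0 := by
        rw [← aux_fderiv_sum]; exact (hdir b hb x).2
      have hstar : (∑ k, (starRingEnd ℂ) (b k) * fderiv ℝ f x (Pi.single k 1)) = 0 := by
        have hsplit : (∑ k, (starRingEnd ℂ) (b k) * fderiv ℝ f x (Pi.single k 1))
            = (∑ k, (((b k).re : ℝ) : ℂ) * fderiv ℝ f x (Pi.single k 1))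
              - Complex.I * ∑ k, (((b k).im : ℝ) : ℂ) * fderiv ℝ f x (Pi.single k 1) := by
          rw [Finset.mul_sum, ← Finset.sum_sub_distrib]
          refine Finset.sum_congr rfl fun k _ => ?_
          have hc : (starRingEnd ℂ) (b k) = ((b k).re : ℂ) - ((b k).im : ℂ) * Complex.I := by
            apply Complex.ext <;> simp
          rw [hc]; ring
        rw [hsplit, hBre, hBim]
        simp
      have hsum : (∑ k, ((Pi.single j 1 : Fin d → ℂ) k) * fderiv ℝ f x (Pi.single k 1)) = 0 := by
        rw [hab]
        simp only [Pi.add_apply, Pi.star_apply, add_mul, Complex.star_def]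
        rw [Finset.sum_add_distrib, hA, hstar, add_zero]
      simpa [Pi.single_apply] using hsum
    apply ContinuousLinearMap.ext
    intro v
    rw [aux_fderiv_sum]
    simp [hsing]
  exact ⟨f 0, fun x => is_const_of_fderiv_eq_zero hdiff hzero x 0⟩
end
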